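/- Let I be a nonempty index set and let (Yᵢ, 𝓑ᵢ), i ∈ I, be ball spaces. The following are equivalent: (i) every (Yᵢ, 𝓑ᵢ), i ∈ I, satisfies S₂; (ii) the product ball space ∏ᵢ (Yᵢ, 𝓑ᵢ) satisfies S₂; (iii) the coproduct ball space ∐ᵢ (Yᵢ, 𝓑ᵢ) satisfies S₂. -/

import Mathlib

open Set

/-- A ball space structure on `X`: a nonempty collection of nonempty subsets of `X`. -/
def IsBallSpace {X : Type*} (B : Set (Set X)) : Prop :=
  B.Nonempty ∧ ∀ b ∈ B, b.Nonempty

/-- A nest of balls in `B`: a nonempty subfamily of `B` totally ordered by inclusion. -/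
def IsNest {X : Type*} (B N : Set (Set X)) : Prop :=
  N.Nonempty ∧ N ⊆ B ∧ IsChain (· ⊆ ·) N

/-- S₂: the intersection of every nest of balls contains a ball. -/
def S2 {X : Type*} (B : Set (Set X)) : Prop :=
  ∀ N, IsNest B N → ∃ b ∈ B, b ⊆ ⋂₀ N

/-- The balls of the product ball space: the sets `∏ᵢ bᵢ` such that for some `k`,
`bₖ ∈ Bₖ` and `bᵢ = Yᵢ` for all `i ≠ k`. -/
def prodBalls {I : Type*} {Y : I → Type*} (B : ∀ i, Set (Set (Y i))) :
    Set (Set (∀ i, Y i)) :=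
  { S | ∃ (b : ∀ i, Set (Y i)) (k : I), b k ∈ B k ∧ (∀ i, i ≠ k → b i = univ) ∧
      S = { x | ∀ i, x i ∈ b i } }

/-- The balls of the coproduct ball space on the disjoint union `Σ i, Y i`:
the sets `⋃ᵢ ιᵢ(bᵢ)` with `bᵢ ∈ Bᵢ` for every `i`. -/
def coprodBalls {I : Type*} {Y : I → Type*} (B : ∀ i, Set (Set (Y i))) :
    Set (Set (Σ i, Y i)) :=
  { S | ∃ b : ∀ i, Set (Y i), (∀ i, b i ∈ B i) ∧ S = { p : Σ i, Y i | p.2 ∈ b p.1 } }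

/-!
Maps between ball families that are monotone for inclusion carry nests to nests. The fibres
`Sigma.mk i ⁻¹' ·` carry a nest of coproduct balls to a nest in every summand, and balls below
these nests assemble to a coproduct ball; conversely a nest in `B k` is pushed into the coproduct
by filling the other summands with fixed balls, and into the product along `eval k ⁻¹' ·`.
The subtle case is a nest of product balls: cylinders over different coordinates are comparable
only if one of them is `univ`, so apart from copies of `univ` such a nest consists of cylinders
over a single coordinate, where S₂ of that factor applies.
-/

open Function

section General

variable {X X' : Type*} {B N : Set (Set X)} {B' : Set (Set X')} {f : Set X → Set X'}

lemma IsNest.image (hN : IsNest B N) (hf : Monotone f) (hfB : MapsTo f B B') :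
    IsNest B' (f '' N) :=
  ⟨hN.1.image f, (image_mono hN.2.1).trans hfB.image_subset, hf.isChain_image hN.2.2⟩

lemma S2.of_monotone (hS : S2 B') (hf : Monotone f) (hfB : MapsTo f B B')
    (hlower : ∀ b' ∈ B', ∃ b ∈ B, ∀ c ∈ B, b' ⊆ f c → b ⊆ c) : S2 B := by
  intro N hN
  obtain ⟨b', hb', hb'N⟩ := hS _ (hN.image hf hfB)
  obtain ⟨b, hb, hbc⟩ := hlower b' hb'
  exact ⟨b, hb, subset_sInter fun c hc =>
    hbc c (hN.2.1 hc) (hb'N.trans (sInter_subset_of_mem (mem_image_of_mem f hc)))⟩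

end General

section Product

variable {I : Type*} {Y : I → Type*} {B : ∀ i, Set (Set (Y i))}

lemma mem_prodBalls_iff {S : Set (∀ i, Y i)} :
    S ∈ prodBalls B ↔ ∃ k, ∃ c ∈ B k, S = eval k ⁻¹' c := by
  classical
  constructor
  · rintro ⟨b, k, hbk, hb, rfl⟩
    refine ⟨k, b k, hbk, ext fun x => ⟨fun h => h k, fun h i => ?_⟩⟩
    rcases eq_or_ne i k with rfl | hi
    · exact h
    · exact hb i hi ▸ mem_univ _
  · rintro ⟨k, c, hc, rfl⟩
    refine ⟨update (fun _ => univ) k c, k, by simpa, fun i hi => update_of_ne hi _ _, ?_⟩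
    ext x
    simp [eval_preimage]

variable [∀ i, Nonempty (Y i)]

lemma eq_univ_of_preimage_eval_subset {k k' : I} (hk : k ≠ k') {c : Set (Y k)}
    {c' : Set (Y k')} (hc : c.Nonempty) (h : eval k ⁻¹' c ⊆ eval k' ⁻¹' c') : c' = univ := by
  classical
  obtain ⟨z, hz⟩ := hc
  refine eq_univ_of_forall fun y => ?_
  have := @h (update (update (Classical.arbitrary _) k z) k' y) (by simp [update_of_ne hk, hz])
  simpa using this

lemma IsChain.eq_univ_of_preimage_eval {N : Set (Set (∀ i, Y i))} (hN : IsChain (· ⊆ ·) N)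
    {k k' : I} (hk : k' ≠ k) {c₀ : Set (Y k)} {c : Set (Y k')} (hc₀ : c₀.Nonempty)
    (hc₀' : c₀ ≠ univ) (hc : c.Nonempty) (h₀ : eval k ⁻¹' c₀ ∈ N) (h : eval k' ⁻¹' c ∈ N) :
    c = univ := by
  rcases hN.total h h₀ with h' | h'
  · exact absurd (eq_univ_of_preimage_eval_subset hk hc h') hc₀'
  · exact eq_univ_of_preimage_eval_subset hk.symm hc₀ h'

theorem S2_prodBalls (hB : ∀ i, ∀ b ∈ B i, b.Nonempty) (hS : ∀ i, S2 (B i)) :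
    S2 (prodBalls B) := by
  intro N hN
  by_cases h : ∃ k, ∃ c₀ ∈ B k, eval k ⁻¹' c₀ ∈ N ∧ c₀ ≠ univ
  · obtain ⟨k, c₀, hc₀B, hc₀N, hc₀⟩ := h
    have hM : IsNest (B k) (B k ∩ (eval k ⁻¹' ·) ⁻¹' N) :=
      ⟨⟨c₀, hc₀B, hc₀N⟩, inter_subset_left,
        (hN.2.2.preimage _ _ _ (surjective_eval k).preimage_injective
          fun _ _ => (surjective_eval k).preimage_subset_preimage_iff.1).mono inter_subset_right⟩
    obtain ⟨d, hd, hdM⟩ := hS k _ hM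
    refine ⟨eval k ⁻¹' d, mem_prodBalls_iff.2 ⟨k, d, hd, rfl⟩, subset_sInter fun S hSN => ?_⟩
    obtain ⟨k', c, hc, rfl⟩ := mem_prodBalls_iff.1 (hN.2.1 hSN)
    rcases eq_or_ne k' k with rfl | hk
    · exact preimage_mono (hdM.trans (sInter_subset_of_mem ⟨hc, hSN⟩))
    · rw [hN.2.2.eq_univ_of_preimage_eval hk (hB k c₀ hc₀B) hc₀ (hB k' c hc) hc₀N hSN,
        preimage_univ]
      exact subset_univ _
  · push Not at h
    obtain ⟨S, hS⟩ := hN.1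
    refine ⟨S, hN.2.1 hS, subset_sInter fun T hT => ?_⟩
    obtain ⟨k, c, hc, rfl⟩ := mem_prodBalls_iff.1 (hN.2.1 hT)
    rw [h k c hc hT, preimage_univ]
    exact subset_univ _

theorem S2_of_S2_prodBalls (hB : ∀ i, ∀ b ∈ B i, b.Nonempty) (h : S2 (prodBalls B)) {k : I}
    (hBk : (B k).Nonempty) : S2 (B k) := by
  refine h.of_monotone (f := (eval k ⁻¹' ·)) (fun _ _ => preimage_mono)
    (fun c hc => mem_prodBalls_iff.2 ⟨k, c, hc, rfl⟩) fun b' hb' => ?_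
  obtain ⟨k', d, hd, rfl⟩ := mem_prodBalls_iff.1 hb'
  rcases eq_or_ne k' k with rfl | hk
  · exact ⟨d, hd, fun c _ => (surjective_eval k').preimage_subset_preimage_iff.1⟩
  · obtain ⟨e, he⟩ := hBk
    exact ⟨e, he, fun c _ hdc =>
      eq_univ_of_preimage_eval_subset hk (hB k' d hd) hdc ▸ subset_univ e⟩

end Product

section Coproduct

variable {I : Type*} {Y : I → Type*} {B : ∀ i, Set (Set (Y i))}

theorem S2_coprodBalls (hS : ∀ i, S2 (B i)) : S2 (coprodBalls B) := by
  intro N hN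
  have hfiber : ∀ i, MapsTo (Sigma.mk i ⁻¹' ·) (coprodBalls B) (B i) := by
    rintro i _ ⟨b, hb, rfl⟩
    exact hb i
  choose d hd hdN using fun i => hS i _ (hN.image (fun _ _ => preimage_mono) (hfiber i))
  exact ⟨_, ⟨d, hd, rfl⟩, subset_sInter fun S hS ⟨i, y⟩ hy =>
    hdN i hy _ (mem_image_of_mem _ hS)⟩

theorem S2_of_S2_coprodBalls (hB : ∀ i, (B i).Nonempty) (h : S2 (coprodBalls B)) (k : I) :
    S2 (B k) := by
  classical
  choose e he using hB
  have hsigma : Monotone fun b : ∀ i, Set (Y i) => {p : Σ i, Y i | p.2 ∈ b p.1} :=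
    fun _ _ hb p hp => hb p.1 hp
  refine h.of_monotone (hsigma.comp update_mono) (fun c hc => ⟨update e k c, fun i => ?_, rfl⟩)
    fun b' hb' => ?_
  · rcases eq_or_ne i k with rfl | hi
    · simpa using hc
    · simpa [update_of_ne hi] using he i
  · obtain ⟨d, hd, rfl⟩ := hb'
    exact ⟨d k, hd k, fun c _ hdc y hy => by simpa using @hdc ⟨k, y⟩ hy⟩

end Coproduct

theorem prod_coprod_S2_general {I : Type*} {Y : I → Type*}
    (B : ∀ i, Set (Set (Y i))) (hB : ∀ i, IsBallSpace (B i)) :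
    ((∀ i, S2 (B i)) ↔ S2 (prodBalls B)) ∧
    ((∀ i, S2 (B i)) ↔ S2 (coprodBalls B)) := by
  have hBalls : ∀ i, ∀ b ∈ B i, b.Nonempty := fun i => (hB i).2
  have : ∀ i, Nonempty (Y i) := fun i =>
    let ⟨b, hb⟩ := (hB i).1
    let ⟨y, _⟩ := hBalls i b hb
    ⟨y⟩
  exact ⟨⟨S2_prodBalls hBalls, fun h _ => S2_of_S2_prodBalls hBalls h (hB _).1⟩,
    ⟨S2_coprodBalls, S2_of_S2_coprodBalls fun i => (hB i).1⟩⟩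

theorem prod_coprod_S2 {I : Type*} [Nonempty I] {Y : I → Type*}
    (B : ∀ i, Set (Set (Y i))) (hB : ∀ i, IsBallSpace (B i)) :
    ((∀ i, S2 (B i)) ↔ S2 (prodBalls B)) ∧
    ((∀ i, S2 (B i)) ↔ S2 (coprodBalls B)) :=
  prod_coprod_S2_general B hB
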